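/- arXiv:2507.17694 — 3 statements merged into one kernel-verified Lean document; each statement's English description precedes it below -/
import Mathlib

section
/- Let r ≥ 1. For every n ∈ ℕ₀, if m = n + r·F(n/r) + r, then m - r·F(m/r) = n, where F(x) = ⌊(-1/2) + (1/2)√(1+8x)⌋. That is, n ↦ m = n + r·F(n/r) + r has left inverse m ↦ m - r·F(m/r) on its image. -/
noncomputable def F (x : ℝ) : ℤ := ⌊(-1/2 : ℝ) + (1/2 : ℝ) * Real.sqrt (1 + 8 * x)⌋

lemma F_eq_of (x : ℝ) (i : ℤ) (hi : 0 ≤ i)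
    (h1 : ((i : ℝ) * ((i:ℝ) + 1)) / 2 ≤ x) (h2 : x < ((i : ℝ) + 1) * ((i : ℝ) + 2) / 2) :
    F x = i := by
  have hi' : (0 : ℝ) ≤ 2 * (i:ℝ) + 1 := by
    have : (0:ℝ) ≤ (i:ℝ) := by exact_mod_cast hi
    linarith
  have hs1 : (2 * (i : ℝ) + 1) ≤ Real.sqrt (1 + 8 * x) := by
    rw [show (2 * (i:ℝ) + 1) = Real.sqrt ((2*(i:ℝ)+1)^2) from (Real.sqrt_sq hi').symm]
    apply Real.sqrt_le_sqrt
    nlinarith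
  have hs2 : Real.sqrt (1 + 8 * x) < 2 * (i : ℝ) + 3 := by
    apply (Real.sqrt_lt' (by linarith)).mpr
    nlinarith
  unfold F
  rw [Int.floor_eq_iff]
  constructor
  · push_cast; linarith
  · push_cast; linarith

lemma F_bounds (x : ℝ) (hx : 0 ≤ x) :
    0 ≤ F x ∧ ((F x : ℝ) * ((F x : ℝ) + 1)) / 2 ≤ x ∧
      x < ((F x : ℝ) + 1) * ((F x : ℝ) + 2) / 2 := by
  have hs0 : (1:ℝ) ≤ Real.sqrt (1 + 8 * x) := by
    have := Real.sqrt_le_sqrt (show (1:ℝ) ≤ 1 + 8 * x by linarith)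
    rwa [Real.sqrt_one] at this
  have hF0 : 0 ≤ F x := by
    unfold F
    apply Int.floor_nonneg.mpr
    linarith
  refine ⟨hF0, ?_, ?_⟩ <;>
  · have h1 : ((F x : ℝ)) ≤ (-1/2 : ℝ) + (1/2 : ℝ) * Real.sqrt (1 + 8 * x) := Int.floor_le _
    have h2 : (-1/2 : ℝ) + (1/2 : ℝ) * Real.sqrt (1 + 8 * x) < (F x : ℝ) + 1 := Int.lt_floor_add_one _
    have hsq : (Real.sqrt (1 + 8 * x))^2 = 1 + 8 * x := Real.sq_sqrt (by linarith)
    nlinarith [Real.sqrt_nonneg (1 + 8 * x)]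

theorem left_inverse_k1 (r : ℕ) (hr : 1 ≤ r) (n : ℕ) :
    let m : ℤ := (n : ℤ) + r * F ((n : ℝ) / r) + r
    m - r * F ((m : ℝ) / r) = n := by
  intro m
  have hr0 : (0:ℝ) < r := by exact_mod_cast hr
  set i := F ((n : ℝ) / r) with hi_def
  obtain ⟨h0, h1, h2⟩ := F_bounds ((n : ℝ) / r) (by positivity)
  have hmr : (m : ℝ) / r = (n : ℝ) / r + (i : ℝ) + 1 := by
    show (((n : ℤ) + r * i + r : ℤ) : ℝ) / r = _
    push_cast
    field_simp
  have hF : F ((m : ℝ) / r) = i + 1 := by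
    apply F_eq_of _ _ (by linarith)
    · rw [hmr]; push_cast
      nlinarith [div_nonneg (Nat.cast_nonneg (α := ℝ) n) hr0.le]
    · rw [hmr]; push_cast
      nlinarith
  rw [hF]
  push_cast
  ring
end

section
/- Let r ≥ 1. For every n ∈ ℕ₀, if m = n + r·F(n/r) + 2r, then m - r·F(m/r - 1) - r = n, where F(x) = ⌊(-1/2) + (1/2)√(1+8x)⌋. -/
lemma F_spec (x : ℝ) (hx : 0 ≤ x) :
    0 ≤ F x ∧ ((F x : ℝ) * (F x + 1)) / 2 ≤ x ∧ x < ((F x : ℝ) + 1) * ((F x : ℝ) + 2) / 2 := by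
  have h1 : (1 : ℝ) ≤ 1 + 8 * x := by linarith
  have hs1 : (1 : ℝ) ≤ Real.sqrt (1 + 8 * x) := by
    nlinarith [Real.sq_sqrt (show (0:ℝ) ≤ 1 + 8 * x by linarith), Real.sqrt_nonneg (1 + 8 * x)]
  have hsq : Real.sqrt (1 + 8 * x) ^ 2 = 1 + 8 * x := Real.sq_sqrt (by linarith)
  set s := Real.sqrt (1 + 8 * x) with hsdef
  have hfle : (F x : ℝ) ≤ -1/2 + 1/2 * s := Int.floor_le _
  have hflt : -1/2 + 1/2 * s < (F x : ℝ) + 1 := Int.lt_floor_add_one _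
  have h0 : 0 ≤ F x := by
    have : (0:ℝ) ≤ -1/2 + 1/2 * s := by linarith
    exact_mod_cast Int.le_floor.2 (by exact_mod_cast this)
  refine ⟨h0, ?_, ?_⟩
  · -- s ≥ 2k+1, square
    have h2 : (2 * (F x : ℝ) + 1) ≤ s := by linarith
    have hk : (0:ℝ) ≤ 2 * (F x : ℝ) + 1 := by positivity
    nlinarith [sq_nonneg s]
  · have h2 : s < 2 * (F x : ℝ) + 3 := by linarith
    nlinarith [sq_nonneg s]

lemma F_eq (x : ℝ) (k : ℤ) (hk : 0 ≤ k) (hl : ((k:ℝ) * (k + 1)) / 2 ≤ x)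
    (hu : x < ((k:ℝ) + 1) * ((k:ℝ) + 2) / 2) : F x = k := by
  have hx : 0 ≤ x := le_trans (by positivity) hl
  have h1 : (0 : ℝ) ≤ 1 + 8 * x := by linarith
  have hsq : Real.sqrt (1 + 8 * x) ^ 2 = 1 + 8 * x := Real.sq_sqrt h1
  have hs0 : 0 ≤ Real.sqrt (1 + 8 * x) := Real.sqrt_nonneg _
  set s := Real.sqrt (1 + 8 * x) with hsdef
  have hk' : (0:ℝ) ≤ (k:ℝ) := by exact_mod_cast hk
  have hlow : 2 * (k:ℝ) + 1 ≤ s := by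
    nlinarith [sq_nonneg (s - (2 * (k:ℝ) + 1))]
  have hup : s < 2 * (k:ℝ) + 3 := by
    nlinarith [sq_nonneg (s + (2 * (k:ℝ) + 3))]
  unfold F
  rw [← hsdef]
  rw [Int.floor_eq_iff]
  constructor <;> push_cast <;> linarith

theorem left_inverse_k2 (r : ℕ) (hr : 1 ≤ r) (n : ℕ) :
    let m : ℤ := (n : ℤ) + r * F ((n : ℝ) / r) + 2 * r
    m - r * F ((m : ℝ) / r - 1) - r = n := by
  intro m
  have hr0 : (0:ℝ) < r := by exact_mod_cast hr
  have hx : (0:ℝ) ≤ (n:ℝ) / r := by positivity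
  obtain ⟨h0, hl, hu⟩ := F_spec ((n:ℝ)/r) hx
  set k := F ((n:ℝ)/r) with hkdef
  have hm : (m : ℝ) = (n:ℝ) + r * k + 2 * r := by
    simp only [hkdef, m]
    push_cast
    ring
  have harg : (m : ℝ) / r - 1 = (n:ℝ)/r + (k:ℝ) + 1 := by
    field_simp [hm]
    rw [hm]; ring
  have hF : F ((m : ℝ) / r - 1) = k + 1 := by
    rw [harg]
    apply F_eq _ _ (by omega)
    · push_cast
      nlinarith
    · push_cast
      nlinarith
  simp only [hF, m]
  ring
end

section
/- Let X : ℝ² → (ℕ₀ → ℝ) be defined by X(x₁,x₂)(I) = x₁^{i-j}·x₂^{j} where I = i(i+1)/2 + j with 0 ≤ j ≤ i. Define Λ₂ by (Λ₂ f)(n) = f(n + F(n) + 2) where F(x) = ⌊(-1/2)+(1/2)√(1+8x)⌋. Then (Λ₂ X(x₁,x₂))(n) = x₂ · X(x₁,x₂)(n) for all n ∈ ℕ₀ and all (x₁,x₂) ∈ ℝ². -/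
noncomputable def Fn (n : ℕ) : ℕ := (F (n : ℝ)).toNat

lemma two_mul_tri (i : ℕ) : 2 * (i * (i + 1) / 2) = i * (i + 1) :=
  Nat.mul_div_cancel' (Nat.even_mul_succ_self i).two_dvd

lemma exists_ij (n : ℕ) : ∃ i j, j ≤ i ∧ n = i * (i + 1) / 2 + j := by
  induction n with
  | zero => exact ⟨0, 0, le_refl 0, rfl⟩
  | succ n ih =>
    obtain ⟨i, j, hji, hn⟩ := ih
    by_cases hj : j < i
    · exact ⟨i, j + 1, hj, by omega⟩
    · refine ⟨i + 1, 0, Nat.zero_le _, ?_⟩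
      have h1 := two_mul_tri i
      have h2 := two_mul_tri (i + 1)
      have h3 : (i + 1) * (i + 1 + 1) = i * (i + 1) + 2 * (i + 1) := by ring
      omega

lemma F_tri (i j : ℕ) (h : j ≤ i) : F ((i * (i + 1) / 2 + j : ℕ) : ℝ) = i := by
  have h2 := two_mul_tri i
  have hc : ((i * (i + 1) / 2 + j : ℕ) : ℝ) = ((i : ℝ) * (i + 1)) / 2 + j := by
    have : ((2 * (i * (i + 1) / 2) : ℕ) : ℝ) = ((i * (i + 1) : ℕ) : ℝ) := by rw [h2]
    push_cast at this ⊢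
    linarith
  unfold F
  rw [hc]
  set a : ℝ := 1 + 8 * ((i : ℝ) * (i + 1) / 2 + j) with ha
  have hann : 0 ≤ a := by positivity
  have hs := Real.sq_sqrt hann
  have hsnn := Real.sqrt_nonneg a
  set s := Real.sqrt a with hsdef
  have hji : (j : ℝ) ≤ i := by exact_mod_cast h
  have hjnn : (0 : ℝ) ≤ j := Nat.cast_nonneg j
  have hlow : (2 * i + 1 : ℝ) ≤ s := by
    rw [hsdef]
    rw [show a = ((2 * (i:ℝ) + 1))^2 + 8 * j by rw [ha]; ring]
    nlinarith [Real.sqrt_le_sqrt (show ((2 * (i:ℝ) + 1))^2 ≤ ((2 * (i:ℝ) + 1))^2 + 8 * j by linarith),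
      Real.sqrt_sq (show (0:ℝ) ≤ 2 * i + 1 by positivity)]
  have hhigh : s < 2 * i + 3 := by
    have h1 : a < (2 * (i:ℝ) + 3)^2 := by rw [ha]; nlinarith
    nlinarith
  rw [Int.floor_eq_iff]
  push_cast
  constructor <;> linarith

lemma Fn_tri (i j : ℕ) (h : j ≤ i) : Fn (i * (i + 1) / 2 + j) = i := by
  unfold Fn
  rw [F_tri i j h]
  simp

theorem shift_eigen_x2 (X : ℝ × ℝ → ℕ → ℝ)
    (hX : ∀ (x₁ x₂ : ℝ) (i j : ℕ), j ≤ i →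
      X (x₁, x₂) (i * (i + 1) / 2 + j) = x₁ ^ (i - j) * x₂ ^ j) :
    ∀ (x₁ x₂ : ℝ) (n : ℕ), X (x₁, x₂) (n + Fn n + 2) = x₂ * X (x₁, x₂) n := by
  intro x₁ x₂ n
  obtain ⟨i, j, hji, rfl⟩ := exists_ij n
  rw [Fn_tri i j hji]
  have hidx : i * (i + 1) / 2 + j + i + 2 = (i + 1) * (i + 2) / 2 + (j + 1) := by
    have h1 := two_mul_tri i
    have h2 := two_mul_tri (i + 1)
    have h3 : (i + 1) * (i + 2) = i * (i + 1) + 2 * (i + 1) := by ring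
    omega
  rw [hidx, hX x₁ x₂ (i + 1) (j + 1) (by omega), hX x₁ x₂ i j hji]
  have : i + 1 - (j + 1) = i - j := by omega
  rw [this]
  ring
end
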